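/- An extremally disconnected space X has the semi-Menger property S_fin(sO, sO) if and only if Alice (player One) does not have a winning strategy in the game G_fin(sO, sO) on X. -/

import Mathlib

open Set

variable {X : Type*} [TopologicalSpace X]

/-- A set is semi-open if it is contained in the closure of its interior. -/
def SemiOpen (A : Set X) : Prop := A ⊆ closure (interior A)

/-- A family of sets is a semi-open cover if all members are semi-open and it covers the space. -/
def IsSemiOpenCover (U : Set (Set X)) : Prop := (∀ A ∈ U, SemiOpen A) ∧ ⋃₀ U = univ

/-- The semi-Menger property `S_fin(sO, sO)`. -/
def SFinSO (X : Type*) [TopologicalSpace X] : Prop :=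
  ∀ U : ℕ → Set (Set X), (∀ n, IsSemiOpenCover (U n)) →
    ∃ V : ℕ → Set (Set X), (∀ n, V n ⊆ U n ∧ (V n).Finite) ∧ ⋃₀ (⋃ n, V n) = univ

/-- The semi-Rothberger property `S_1(sO, sO)`. -/
def S1SO (X : Type*) [TopologicalSpace X] : Prop :=
  ∀ U : ℕ → Set (Set X), (∀ n, IsSemiOpenCover (U n)) →
    ∃ V : ℕ → Set X, (∀ n, V n ∈ U n) ∧ (⋃ n, V n) = univ

/-- A strategy for Alice in `G_fin(sO,sO)` (a function from finite histories of Bob's moves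
to semi-open covers) is winning if every play following it is lost by Bob. -/
def AliceWinningFin (σ : List (Set (Set X)) → Set (Set X)) : Prop :=
  (∀ h, IsSemiOpenCover (σ h)) ∧
  ∀ b : ℕ → Set (Set X),
    (∀ n, b n ⊆ σ (List.ofFn fun i : Fin n => b i) ∧ (b n).Finite) →
    ⋃₀ (⋃ n, b n) ≠ univ

/-- A strategy for Alice in `G_1(sO,sO)` is winning if every play following it is lost by Bob. -/
def AliceWinningOne (σ : List (Set X) → Set (Set X)) : Prop :=
  (∀ h, IsSemiOpenCover (σ h)) ∧
  ∀ b : ℕ → Set X,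
    (∀ n, b n ∈ σ (List.ofFn fun i : Fin n => b i)) →
    (⋃ n, b n) ≠ univ

/-- A family indexed by `ι` is a tail semi-open cover if the intersection of every cofinite
subfamily is semi-open and these intersections cover the space. -/
def TailSemiCover {ι : Type*} (U : ι → Set X) : Prop :=
  (∀ I : Set ι, Iᶜ.Finite → SemiOpen (⋂ i ∈ I, U i)) ∧
  ∀ x : X, ∃ I : Set ι, Iᶜ.Finite ∧ x ∈ ⋂ i ∈ I, U i

lemma semiOpen_univ' : SemiOpen (univ : Set X) := by
  intro x hx
  rw [interior_univ, closure_univ]; exact hx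

lemma semiOpen_sUnion' {U : Set (Set X)} (h : ∀ A ∈ U, SemiOpen A) :
    SemiOpen (⋃₀ U) := by
  rintro x ⟨A, hA, hxA⟩
  exact closure_mono (interior_mono (subset_sUnion_of_mem hA)) (h A hA hxA)

lemma semiOpen_inter' [ExtremallyDisconnected X] {A B : Set X}
    (hA : SemiOpen A) (hB : SemiOpen B) : SemiOpen (A ∩ B) := by
  have hU : IsOpen (closure (interior A)) :=
    ExtremallyDisconnected.open_closure _ isOpen_interior
  have h2 : closure (interior A) ∩ closure (interior B) ⊆
      closure (closure (interior A) ∩ interior B) := hU.inter_closure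
  have hO : IsOpen (closure (interior A) ∩ interior B) := hU.inter isOpen_interior
  have h3 : closure (interior A) ∩ interior B ⊆
      closure ((closure (interior A) ∩ interior B) ∩ interior A) := by
    intro y hy
    exact hO.inter_closure ⟨hy, hy.1⟩
  have h4 : (closure (interior A) ∩ interior B) ∩ interior A ⊆ interior (A ∩ B) := by
    rintro y ⟨⟨_, hyB⟩, hyA⟩
    rw [interior_inter]; exact ⟨hyA, hyB⟩
  intro x hx
  have hx1 : x ∈ closure (interior A) ∩ closure (interior B) := ⟨hA hx.1, hB hx.2⟩
  have hx3 : x ∈ closure (closure ((closure (interior A) ∩ interior B) ∩ interior A)) :=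
    closure_mono h3 (h2 hx1)
  rw [closure_closure] at hx3
  exact closure_mono h4 hx3

/-- The history of Bob's moves determined by a list of move-indices (most recent first). -/
def histA (g : List (Set (Set X)) → ℕ → Set (Set X)) : List ℕ → List (Set (Set X))
  | [] => []
  | m :: s => histA g s ++ [g (histA g s) m]

/-- The finite tree of nodes (most recent move first) dominated by `φ`, of height `≤ n`. -/
def TfinA (φ : List ℕ → ℕ) : ℕ → Finset (List ℕ)
  | 0 => {[]}
  | n + 1 => {[]} ∪ (TfinA φ n).biUnion (fun s => (Finset.range (φ s + 1)).image (fun m => m :: s))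

/-- Bob's nodes when he plays according to the bound function `β`. -/
def nodeA (β : List ℕ → ℕ → ℕ) : ℕ → List ℕ
  | 0 => []
  | n + 1 => β (nodeA β n) n :: nodeA β n

lemma nil_mem_TfinA (φ : List ℕ → ℕ) : ∀ n, [] ∈ TfinA φ n
  | 0 => by simp [TfinA]
  | _ + 1 => by simp [TfinA]

lemma cons_mem_TfinA (φ : List ℕ → ℕ) (m : ℕ) (s : List ℕ) (n : ℕ) :
    (m :: s) ∈ TfinA φ (n + 1) ↔ s ∈ TfinA φ n ∧ m ≤ φ s := by
  simp only [TfinA, Finset.mem_union, Finset.mem_singleton, Finset.mem_biUnion,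
    Finset.mem_image, Finset.mem_range, Nat.lt_succ_iff]
  constructor
  · rintro (h | ⟨s', hs', m', hm', heq⟩)
    · simp at h
    · injection heq with h1 h2
      subst h1; subst h2
      exact ⟨hs', hm'⟩
  · rintro ⟨hs, hm⟩
    exact Or.inr ⟨s, hs, m, hm, rfl⟩

lemma TfinA_mono (φ : List ℕ → ℕ) : ∀ n, TfinA φ n ⊆ TfinA φ (n + 1)
  | 0 => by
    intro s hs
    simp only [TfinA, Finset.mem_singleton] at hs
    subst hs
    exact nil_mem_TfinA φ 1
  | n + 1 => by
    intro s hs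
    match s with
    | [] => exact nil_mem_TfinA φ (n + 2)
    | m :: s =>
      rw [cons_mem_TfinA] at hs ⊢
      exact ⟨TfinA_mono φ n hs.1, hs.2⟩

lemma TfinA_le_mono (φ : List ℕ → ℕ) {m n : ℕ} (h : m ≤ n) : TfinA φ m ⊆ TfinA φ n := by
  induction h with
  | refl => exact subset_rfl
  | step _ ih => exact ih.trans (TfinA_mono φ _)

lemma nodeA_mem_TfinA (β : List ℕ → ℕ → ℕ) (φ : List ℕ → ℕ) :
    ∀ k, (∀ j, j < k → β (nodeA β j) j ≤ φ (nodeA β j)) → nodeA β k ∈ TfinA φ k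
  | 0, _ => nil_mem_TfinA φ 0
  | k + 1, h => by
    have hk : nodeA β (k + 1) = β (nodeA β k) k :: nodeA β k := rfl
    rw [hk, cons_mem_TfinA]
    exact ⟨nodeA_mem_TfinA β φ k (fun j hj => h j (hj.trans (Nat.lt_succ_self k))),
      h k (Nat.lt_succ_self k)⟩

theorem stmt10 [ExtremallyDisconnected X] :
    SFinSO X ↔ ¬ ∃ σ : List (Set (Set X)) → Set (Set X), AliceWinningFin σ := by
  classical
  constructor
  · -- hard direction: semi-Menger implies Alice has no winning strategy
    rintro hS ⟨σ, hσcov, hσwin⟩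
    -- Step 1: countable "subcover" data for every history, from SFinSO with constant covers
    have hsub : ∀ h : List (Set (Set X)), ∃ W : ℕ → Set (Set X),
        (∀ n, W n ⊆ σ h ∧ (W n).Finite) ∧ ⋃₀ (⋃ n, W n) = univ :=
      fun h => hS (fun _ => σ h) (fun _ => hσcov h)
    choose W hW1 hW2 using hsub
    -- cumulative finite families
    set g : List (Set (Set X)) → ℕ → Set (Set X) :=
      fun h m => ⋃ j ∈ Finset.range (m + 1), W h j with hgdef
    have hg_sub : ∀ h m, g h m ⊆ σ h := by
      intro h m A hA
      simp only [hgdef, mem_iUnion] at hA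
      obtain ⟨j, _, hA⟩ := hA
      exact (hW1 h j).1 hA
    have hg_fin : ∀ h m, (g h m).Finite :=
      fun h m => Set.Finite.biUnion (Finset.range (m + 1)).finite_toSet
        (fun j _ => (hW1 h j).2)
    have hg_mono : ∀ (h : List (Set (Set X))) {m m' : ℕ}, m ≤ m' → g h m ⊆ g h m' := by
      intro h m m' hmm A hA
      simp only [hgdef, mem_iUnion, Finset.mem_range, Nat.lt_succ_iff] at hA ⊢
      obtain ⟨j, hj, hA⟩ := hA
      exact ⟨j, hj.trans hmm, hA⟩
    have hg_cov : ∀ (h : List (Set (Set X))) (x : X), ∃ m, x ∈ ⋃₀ g h m := by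
      intro h x
      have hx : x ∈ ⋃₀ (⋃ n, W h n) := (hW2 h).symm ▸ mem_univ x
      obtain ⟨A, hA, hxA⟩ := hx
      rw [mem_iUnion] at hA
      obtain ⟨m, hA⟩ := hA
      refine ⟨m, A, ?_, hxA⟩
      simp only [hgdef, mem_iUnion, Finset.mem_range]
      exact ⟨m, Nat.lt_succ_self m, hA⟩
    -- node data
    set Hs : List ℕ → List (Set (Set X)) := histA g with hHs
    set mvf : List ℕ → ℕ → Set (Set X) := fun s m => g (Hs s) m with hmv
    set SS : List ℕ → ℕ → Set X := fun s m => ⋃₀ mvf s m with hSSdef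
    have hSS_semi : ∀ s m, SemiOpen (SS s m) := fun s m =>
      semiOpen_sUnion' (fun A hA => (hσcov (Hs s)).1 A (hg_sub _ _ hA))
    have hSS_mono : ∀ (s : List ℕ) {m m' : ℕ}, m ≤ m' → SS s m ⊆ SS s m' :=
      fun s _ _ h => sUnion_subset_sUnion (hg_mono _ h)
    have hSS_cov : ∀ (s : List ℕ) (x : X), ∃ m, x ∈ SS s m := fun s x => hg_cov (Hs s) x
    -- the main covers
    set Ein : (List ℕ → ℕ) → ℕ → Set X := fun φ n => ⋂ s ∈ TfinA φ n, SS s (φ s) with hEin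
    set 𝒰 : ℕ → Set (Set X) := fun n => {A | ∃ φ : List ℕ → ℕ, A = Ein φ n} with h𝒰def
    have h𝒰 : ∀ n, IsSemiOpenCover (𝒰 n) := by
      intro n
      constructor
      · rintro A ⟨φ, rfl⟩
        have key : ∀ t : Finset (List ℕ), SemiOpen (⋂ s ∈ t, SS s (φ s)) := by
          intro t
          induction t using Finset.induction_on with
          | empty => simpa using (semiOpen_univ' : SemiOpen (univ : Set X))
          | insert _ _ _ ih =>
              rw [Finset.set_biInter_insert]
              exact semiOpen_inter' (hSS_semi _ _) ih
        exact key _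
      · apply eq_univ_of_forall
        intro x
        have hex : ∀ s : List ℕ, ∃ m, x ∈ SS s m := fun s => hSS_cov s x
        choose φx hφx using hex
        exact ⟨Ein φx n, ⟨φx, rfl⟩, mem_iInter₂.2 (fun s _ => hφx s)⟩
    -- Step 2: apply SFinSO to the main covers
    obtain ⟨V, hV1, hV2⟩ := hS 𝒰 h𝒰
    -- choose defining functions for selected elements
    set χ : ℕ → Set X → (List ℕ → ℕ) := fun n A =>
      if h : ∃ φ : List ℕ → ℕ, A = Ein φ n then Classical.choose h else fun _ => 0 with hχ
    have hχ_spec : ∀ n A, A ∈ V n → A = Ein (χ n A) n := by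
      intro n A hA
      have h : ∃ φ, A = Ein φ n := (hV1 n).1 hA
      simp only [hχ, dif_pos h]
      exact Classical.choose_spec h
    -- Bob's bound function and play
    set β : List ℕ → ℕ → ℕ := fun s n => sSup ((fun A => χ n A s) '' V n) with hβ
    have hβ_ge : ∀ (s : List ℕ) (n : ℕ) (A : Set X), A ∈ V n → χ n A s ≤ β s n := by
      intro s n A hA
      exact le_csSup (((hV1 n).2.image _).bddAbove) ⟨A, hA, rfl⟩
    set nd : ℕ → List ℕ := nodeA β with hnd
    set α : ℕ → ℕ := fun n => β (nd n) n with hα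
    set b : ℕ → Set (Set X) := fun n => mvf (nd n) (α n) with hb
    -- history identification
    have hhist : ∀ n, Hs (nd n) = List.ofFn (fun i : Fin n => b i) := by
      intro n
      induction n with
      | zero => simp [hHs, hnd, nodeA, histA]
      | succ n ih =>
        have h1 : nd (n + 1) = α n :: nd n := rfl
        have h2 : Hs (nd (n + 1)) = Hs (nd n) ++ [g (Hs (nd n)) (α n)] := by
          rw [h1]; rfl
        have h3 : List.ofFn (fun i : Fin (n + 1) => b ↑i) =
            (List.ofFn fun i : Fin n => b ↑i) ++ [b n] := by
          rw [List.ofFn_succ']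
          simp [List.concat_eq_append]
        rw [h2, h3, ih]
        rw [show b n = g (Hs (nd n)) (α n) from rfl, ih]
    -- legality of Bob's play
    have hlegal : ∀ n, b n ⊆ σ (List.ofFn fun i : Fin n => b i) ∧ (b n).Finite := by
      intro n
      constructor
      · rw [← hhist n]
        exact hg_sub _ _
      · exact hg_fin _ _
    -- Bob's play covers X
    have hcov : ⋃₀ (⋃ n, b n) = univ := by
      apply eq_univ_of_forall
      intro x
      have hx : x ∈ ⋃₀ (⋃ n, V n) := hV2.symm ▸ mem_univ x
      obtain ⟨A, hAmem, hxA⟩ := hx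
      rw [mem_iUnion] at hAmem
      obtain ⟨n, hAVn⟩ := hAmem
      have hAeq : A = Ein (χ n A) n := hχ_spec n A hAVn
      have hxE : ∀ s ∈ TfinA (χ n A) n, x ∈ SS s (χ n A s) := by
        have hx' : x ∈ Ein (χ n A) n := hAeq ▸ hxA
        exact fun s hs => mem_iInter₂.1 hx' s hs
      by_cases hall : ∀ j, j < n → α j ≤ χ n A (nd j)
      · -- Bob stayed inside the dominated tree: captured at round n
        have hmem : nd n ∈ TfinA (χ n A) n := nodeA_mem_TfinA β (χ n A) n hall
        have h1 : x ∈ SS (nd n) (χ n A (nd n)) := hxE _ hmem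
        have h2 : χ n A (nd n) ≤ α n := hβ_ge (nd n) n A hAVn
        have h3 : x ∈ SS (nd n) (α n) := hSS_mono _ h2 h1
        obtain ⟨A', hA', hxA'⟩ := h3
        exact ⟨A', mem_iUnion.2 ⟨n, hA'⟩, hxA'⟩
      · -- Bob exceeded φ at some earlier round: captured there
        push_neg at hall
        obtain ⟨j0, hj0n, hj0⟩ := hall
        have hex : ∃ j, χ n A (nd j) < α j := ⟨j0, hj0⟩
        set j := Nat.find hex with hj
        have hjspec : χ n A (nd j) < α j := Nat.find_spec hex
        have hjmin : ∀ i, i < j → α i ≤ χ n A (nd i) :=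
          fun i hi => le_of_not_gt (Nat.find_min hex hi)
        have hjn : j ≤ n := le_of_lt (lt_of_le_of_lt (Nat.find_le hj0) hj0n)
        have hmemj : nd j ∈ TfinA (χ n A) j := nodeA_mem_TfinA β (χ n A) j hjmin
        have hmemn : nd j ∈ TfinA (χ n A) n := TfinA_le_mono (χ n A) hjn hmemj
        have h1 : x ∈ SS (nd j) (χ n A (nd j)) := hxE _ hmemn
        have h3 : x ∈ SS (nd j) (α j) := hSS_mono _ hjspec.le h1
        obtain ⟨A', hA', hxA'⟩ := h3
        exact ⟨A', mem_iUnion.2 ⟨j, hA'⟩, hxA'⟩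
    exact hσwin b hlegal hcov
  · -- easy direction
    intro h U hU
    by_contra hno
    push_neg at hno
    refine h ⟨fun l => U l.length, fun _ => hU _, ?_⟩
    intro b hb
    refine hno b ?_
    intro n
    have := hb n
    simpa using this
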